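/- Let r ≥ 1, let μ be a stationary-consistent probability law on A^r with common (r−1)-block marginal μ₋, and let u* be the (r−1)-step Markov extension u*(c,a) := μ(c)·q(a | c₂,…,c_r) with q(a|s) := μ(s,a)/μ₋(s) on {μ₋ > 0}. For every u ∈ U(μ) define the gap Δ_μ(u) := [−∑_{s∈A^{r−1}, a∈A} μ(s,a)·log(μ(s,a)/μ₋(s))] − J(u). Then for every u ∈ U(μ): Δ_μ(u) = ∑_{c∈A^r, a∈A} u(c,a)·log( u(c,a)·μ₋(c₂,…,c_r) / ( μ(c)·μ((c₂,…,c_r),a) ) ) (all terms with u(c,a) = 0 contributing 0), this quantity is nonnegative, and Δ_μ(u) = 0 if and only if u = u*. -/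

import Mathlib

open Finset

/-- Context marginal of a block law on `A^(n+1) × A` (contexts are `Fin (n+1) → A`,
so the memory length is `r = n+1 ≥ 1`). -/
noncomputable def eta {A : Type*} [Fintype A] {n : ℕ}
    (u : (Fin (n + 1) → A) → A → ℝ) (c : Fin (n + 1) → A) : ℝ :=
  ∑ a, u c a

/-- Entropy-rate functional.  In Lean, `Real.log 0 = 0` and `0 * x = 0`, so the
conventions `0·log 0 = 0` and "terms with `u(c,a) = 0` contribute `0`" hold
automatically. -/
noncomputable def J {A : Type*} [Fintype A] {n : ℕ}
    (u : (Fin (n + 1) → A) → A → ℝ) : ℝ :=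
  -∑ c, ∑ a, u c a * Real.log (u c a / eta u c)

/-- A block law: nonnegative entries with total mass one. -/
def IsBlockLaw {A : Type*} [Fintype A] {n : ℕ}
    (u : (Fin (n + 1) → A) → A → ℝ) : Prop :=
  (∀ c a, 0 ≤ u c a) ∧ ∑ c, ∑ a, u c a = 1

/-- The context `(α, d₁, …, d_{r-1})` obtained from `d = (d₁, …, d_r)` by
prepending `α` and dropping the last entry. -/
def shiftCtx {A : Type*} {n : ℕ} (α : A) (d : Fin (n + 1) → A) : Fin (n + 1) → A :=
  Fin.cons α (fun i : Fin n => d i.castSucc)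

/-- Stationary consistency:
`∑_α u((α,d₁,…,d_{r-1}), d_r) = ∑_β u(d, β)` for every block `d`. -/
def StationaryConsistent {A : Type*} [Fintype A] {n : ℕ}
    (u : (Fin (n + 1) → A) → A → ℝ) : Prop :=
  ∀ d : Fin (n + 1) → A,
    ∑ α : A, u (shiftCtx α d) (d (Fin.last n)) = ∑ β : A, u d β

/-- The feasible class determined by features `G` and targets `b`. -/
def Feasible {A : Type*} [Fintype A] {n m : ℕ}
    (G : Fin m → (Fin (n + 1) → A) → A → ℝ) (b : Fin m → ℝ)
    (u : (Fin (n + 1) → A) → A → ℝ) : Prop :=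
  IsBlockLaw u ∧ StationaryConsistent u ∧
    ∀ j, ∑ c, ∑ a, u c a * G j c a = b j

/-- The common `(r-1)`-block marginal `μ₋(s) = ∑_a μ(s,a)` of a
stationary-consistent law `μ` on `A^r` (contexts are `Fin (n+1) → A`, so
`r = n+1` and `(r-1)`-blocks are `Fin n → A`; for `r = 1`, `Fin 0 → A` is a
singleton). -/
noncomputable def muMinus {A : Type*} [Fintype A] {n : ℕ}
    (μ : (Fin (n + 1) → A) → ℝ) (s : Fin n → A) : ℝ :=
  ∑ a, μ (Fin.snoc s a)

/-- The `(r-1)`-step Markov extension `u*(c,a) = μ(c) · q(a | c₂,…,c_r)`. -/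
noncomputable def MarkovExt {A : Type*} [Fintype A] {n : ℕ}
    (μ : (Fin (n + 1) → A) → ℝ) (q : (Fin n → A) → A → ℝ)
    (c : Fin (n + 1) → A) (a : A) : ℝ :=
  μ c * q (Fin.tail c) a

/-! Stationary consistency of `u` gives `∑_α u((α, s), a) = μ(s, a)`, so the conditional entropy
of `μ` equals `∑ u(c,a) log q(a | c₂,…,c_r)`, and the gap becomes the relative entropy
`∑ u log (u / u*)`. Both `u` and `u*` have context marginal `μ`, hence equal mass, and `u* > 0`
wherever `u > 0`; Gibbs' inequality then gives nonnegativity and the equality case. -/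

open Real InformationTheory

section Gibbs

lemma mul_log_div_sub_add_eq_mul_klFun {x y : ℝ} (h : y = 0 → x = 0) :
    x * log (x / y) - x + y = y * klFun (x / y) := by
  rcases eq_or_ne y 0 with rfl | hy
  · simp [h rfl]
  · rw [klFun_apply]
    field_simp
    ring

lemma mul_klFun_div_eq_zero_iff {x y : ℝ} (hx : 0 ≤ x) (hy : 0 ≤ y) (h : y = 0 → x = 0) :
    y * klFun (x / y) = 0 ↔ x = y := by
  rcases eq_or_ne y 0 with rfl | hy'
  · simp [h rfl]
  · rw [mul_eq_zero, klFun_eq_zero_iff (div_nonneg hx hy), div_eq_one_iff_eq hy']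
    simp [hy']

variable {ι : Type*} [Fintype ι] {x y : ι → ℝ}

lemma sum_mul_log_div_eq_sum_mul_klFun (h : ∀ i, y i = 0 → x i = 0)
    (hsum : ∑ i, x i = ∑ i, y i) :
    ∑ i, x i * log (x i / y i) = ∑ i, y i * klFun (x i / y i) := by
  have := Finset.sum_congr rfl fun i (_ : i ∈ Finset.univ) =>
    mul_log_div_sub_add_eq_mul_klFun (h i)
  rw [Finset.sum_add_distrib, Finset.sum_sub_distrib, hsum] at this
  linarith

lemma sum_mul_log_div_nonneg (hx : 0 ≤ x) (hy : 0 ≤ y) (h : ∀ i, y i = 0 → x i = 0)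
    (hsum : ∑ i, x i = ∑ i, y i) :
    0 ≤ ∑ i, x i * log (x i / y i) := by
  rw [sum_mul_log_div_eq_sum_mul_klFun h hsum]
  exact Finset.sum_nonneg fun i _ => mul_nonneg (hy i) (klFun_nonneg (div_nonneg (hx i) (hy i)))

lemma sum_mul_log_div_eq_zero_iff (hx : 0 ≤ x) (hy : 0 ≤ y) (h : ∀ i, y i = 0 → x i = 0)
    (hsum : ∑ i, x i = ∑ i, y i) :
    ∑ i, x i * log (x i / y i) = 0 ↔ x = y := by
  rw [sum_mul_log_div_eq_sum_mul_klFun h hsum, Fintype.sum_eq_zero_iff_of_nonneg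
    fun i => mul_nonneg (hy i) (klFun_nonneg (div_nonneg (hx i) (hy i))), funext_iff, funext_iff]
  exact forall_congr' fun i => mul_klFun_div_eq_zero_iff (hx i) (hy i) (h i)

end Gibbs

lemma shiftCtx_snoc {A : Type*} {n : ℕ} (α : A) (s : Fin n → A) (a : A) :
    shiftCtx α (Fin.snoc s a) = Fin.cons α s := by
  unfold shiftCtx
  congr
  funext i
  exact Fin.snoc_castSucc (α := fun _ => A) a s i

section BlockLaw

variable {A : Type*} [Fintype A] {n : ℕ} {u : (Fin (n + 1) → A) → A → ℝ}

lemma le_eta (hu : ∀ c a, 0 ≤ u c a) (c : Fin (n + 1) → A) (a : A) : u c a ≤ eta u c :=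
  Finset.single_le_sum (fun b _ => hu c b) (Finset.mem_univ a)

lemma eta_nonneg (hu : ∀ c a, 0 ≤ u c a) (c : Fin (n + 1) → A) : 0 ≤ eta u c :=
  Finset.sum_nonneg fun a _ => hu c a

/-- `MarkovExt μ q` with `q(a | s) = μ(s,a) / μ₋(s)` inserted. Where `μ₋(s) = 0` the quotient is
Lean's junk `0`, which is harmless: there `μ(c) = 0`, so `MarkovExt μ q` vanishes for every `q`. -/
noncomputable def markovExtOf (μ : (Fin (n + 1) → A) → ℝ) (c : Fin (n + 1) → A) (a : A) : ℝ :=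
  μ c * μ (Fin.snoc (Fin.tail c) a) / muMinus μ (Fin.tail c)

lemma markovExtOf_nonneg (hu : ∀ c a, 0 ≤ u c a) (c : Fin (n + 1) → A) (a : A) :
    0 ≤ markovExtOf (eta u) c a :=
  div_nonneg (mul_nonneg (eta_nonneg hu c) (eta_nonneg hu _))
    (Finset.sum_nonneg fun _ _ => eta_nonneg hu _)

namespace StationaryConsistent

lemma sum_cons (hsc : StationaryConsistent u) (s : Fin n → A) (a : A) :
    ∑ α, u (Fin.cons α s) a = eta u (Fin.snoc s a) := by
  simpa [shiftCtx_snoc, eta] using hsc (Fin.snoc s a)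

lemma sum_sum_mul_tail (hsc : StationaryConsistent u) (f : (Fin n → A) → A → ℝ) :
    ∑ c, ∑ a, u c a * f (Fin.tail c) a = ∑ s, ∑ a, eta u (Fin.snoc s a) * f s a := by
  rw [← (Fin.consEquiv fun _ => A).sum_comp, Fintype.sum_prod_type, Finset.sum_comm]
  refine Finset.sum_congr rfl fun s _ => ?_
  rw [Finset.sum_comm]
  refine Finset.sum_congr rfl fun a _ => ?_
  change ∑ α, u (Fin.cons α s) a * f (Fin.tail (Fin.cons α s : Fin (n + 1) → A)) a = _
  simp only [Fin.tail_cons, ← Finset.sum_mul, hsc.sum_cons]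

lemma muMinus_eta (hsc : StationaryConsistent u) (s : Fin n → A) :
    muMinus (eta u) s = ∑ α, eta u (Fin.cons α s) := by
  unfold muMinus
  simp only [← hsc.sum_cons]
  exact Finset.sum_comm

lemma le_eta_snoc_tail (hsc : StationaryConsistent u) (hu : ∀ c a, 0 ≤ u c a)
    (c : Fin (n + 1) → A) (a : A) : u c a ≤ eta u (Fin.snoc (Fin.tail c) a) := by
  rw [← hsc.sum_cons]
  simpa using Finset.single_le_sum (f := fun α => u (Fin.cons α (Fin.tail c)) a)
    (fun α _ => hu _ a) (Finset.mem_univ (c 0))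

lemma eta_le_muMinus_tail (hsc : StationaryConsistent u) (hu : ∀ c a, 0 ≤ u c a)
    (c : Fin (n + 1) → A) : eta u c ≤ muMinus (eta u) (Fin.tail c) := by
  rw [hsc.muMinus_eta]
  simpa using Finset.single_le_sum (f := fun α => eta u (Fin.cons α (Fin.tail c)))
    (fun α _ => eta_nonneg hu _) (Finset.mem_univ (c 0))

lemma eta_eq_zero_of_muMinus_tail_eq_zero (hsc : StationaryConsistent u)
    (hu : ∀ c a, 0 ≤ u c a) {c : Fin (n + 1) → A} (h : muMinus (eta u) (Fin.tail c) = 0) :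
    eta u c = 0 :=
  le_antisymm (h ▸ hsc.eta_le_muMinus_tail hu c) (eta_nonneg hu c)

lemma markovExt_eq (hsc : StationaryConsistent u) (hu : ∀ c a, 0 ≤ u c a)
    {q : (Fin n → A) → A → ℝ}
    (hq : ∀ s, 0 < muMinus (eta u) s → ∀ a, q s a = eta u (Fin.snoc s a) / muMinus (eta u) s) :
    MarkovExt (eta u) q = markovExtOf (eta u) := by
  funext c a
  rcases ((eta_nonneg hu c).trans (hsc.eta_le_muMinus_tail hu c)).eq_or_lt with h | h
  · simp [MarkovExt, markovExtOf, hsc.eta_eq_zero_of_muMinus_tail_eq_zero hu h.symm]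
  · rw [MarkovExt, markovExtOf, hq _ h, mul_div_assoc]

lemma sum_markovExtOf (hsc : StationaryConsistent u) (hu : ∀ c a, 0 ≤ u c a)
    (c : Fin (n + 1) → A) : ∑ a, markovExtOf (eta u) c a = eta u c := by
  simp only [markovExtOf, ← Finset.sum_div, ← Finset.mul_sum]
  rcases eq_or_ne (muMinus (eta u) (Fin.tail c)) 0 with h | h
  · simp [hsc.eta_eq_zero_of_muMinus_tail_eq_zero hu h]
  · exact mul_div_cancel_right₀ _ h

lemma markovExtOf_pos (hsc : StationaryConsistent u) (hu : ∀ c a, 0 ≤ u c a)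
    {c : Fin (n + 1) → A} {a : A} (h : 0 < u c a) : 0 < markovExtOf (eta u) c a := by
  have hc := h.trans_le (le_eta hu c a)
  exact div_pos (mul_pos hc (h.trans_le (hsc.le_eta_snoc_tail hu c a)))
    (hc.trans_le (hsc.eta_le_muMinus_tail hu c))

lemma entropy_gap_eq (hsc : StationaryConsistent u) (hu : ∀ c a, 0 ≤ u c a) :
    (-∑ s, ∑ a, eta u (Fin.snoc s a) * log (eta u (Fin.snoc s a) / muMinus (eta u) s)) - J u =
      ∑ c, ∑ a, u c a * log (u c a / markovExtOf (eta u) c a) := by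
  rw [← hsc.sum_sum_mul_tail fun s a => log (eta u (Fin.snoc s a) / muMinus (eta u) s), J,
    neg_sub_neg, ← Finset.sum_sub_distrib]
  refine Finset.sum_congr rfl fun c _ => ?_
  rw [← Finset.sum_sub_distrib]
  refine Finset.sum_congr rfl fun a _ => ?_
  rcases (hu c a).eq_or_lt with h | h
  · simp [← h]
  have hc := h.trans_le (le_eta hu c a)
  have hca := h.trans_le (hsc.le_eta_snoc_tail hu c a)
  rw [markovExtOf, mul_div_assoc, ← div_div, log_div (div_pos h hc).ne'
    (div_pos hca (hc.trans_le (hsc.eta_le_muMinus_tail hu c))).ne', mul_sub]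

lemma eq_zero_of_markovExtOf_eq_zero (hsc : StationaryConsistent u) (hu : ∀ c a, 0 ≤ u c a)
    {c : Fin (n + 1) → A} {a : A} (h : markovExtOf (eta u) c a = 0) : u c a = 0 :=
  (hu c a).eq_or_lt.elim Eq.symm fun hpos => absurd h (hsc.markovExtOf_pos hu hpos).ne'

lemma sum_uncurry_markovExtOf (hsc : StationaryConsistent u) (hu : ∀ c a, 0 ≤ u c a) :
    ∑ p, Function.uncurry u p = ∑ p, Function.uncurry (markovExtOf (eta u)) p := by
  simp only [Fintype.sum_prod_type, Function.uncurry_apply_pair, hsc.sum_markovExtOf hu]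
  rfl

lemma sum_mul_log_div_markovExtOf_nonneg (hsc : StationaryConsistent u) (hu : ∀ c a, 0 ≤ u c a) :
    0 ≤ ∑ c, ∑ a, u c a * log (u c a / markovExtOf (eta u) c a) := by
  rw [← Fintype.sum_prod_type']
  exact sum_mul_log_div_nonneg (x := Function.uncurry u) (fun p => hu p.1 p.2)
    (fun p => markovExtOf_nonneg hu p.1 p.2) (fun _ => hsc.eq_zero_of_markovExtOf_eq_zero hu)
    (hsc.sum_uncurry_markovExtOf hu)

lemma sum_mul_log_div_markovExtOf_eq_zero_iff (hsc : StationaryConsistent u)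
    (hu : ∀ c a, 0 ≤ u c a) :
    ∑ c, ∑ a, u c a * log (u c a / markovExtOf (eta u) c a) = 0 ↔ u = markovExtOf (eta u) := by
  rw [← Fintype.sum_prod_type', ← Function.uncurry_injective.eq_iff]
  exact sum_mul_log_div_eq_zero_iff (x := Function.uncurry u) (fun p => hu p.1 p.2)
    (fun p => markovExtOf_nonneg hu p.1 p.2) (fun _ => hsc.eq_zero_of_markovExtOf_eq_zero hu)
    (hsc.sum_uncurry_markovExtOf hu)

end StationaryConsistent

end BlockLaw

theorem stmt9_general {A : Type*} [Fintype A] {n : ℕ}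
    (μ : (Fin (n + 1) → A) → ℝ)
    (q : (Fin n → A) → A → ℝ)
    (hqpos : ∀ s, 0 < muMinus μ s → ∀ a, q s a = μ (Fin.snoc s a) / muMinus μ s)
    (u : (Fin (n + 1) → A) → A → ℝ)
    (hu : IsBlockLaw u ∧ StationaryConsistent u ∧ ∀ c, eta u c = μ c) :
    ((-∑ s : Fin n → A, ∑ a, μ (Fin.snoc s a) *
        Real.log (μ (Fin.snoc s a) / muMinus μ s)) - J u =
      ∑ c, ∑ a, u c a *
        Real.log (u c a * muMinus μ (Fin.tail c) /
          (μ c * μ (Fin.snoc (Fin.tail c) a)))) ∧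
    0 ≤ (-∑ s : Fin n → A, ∑ a, μ (Fin.snoc s a) *
        Real.log (μ (Fin.snoc s a) / muMinus μ s)) - J u ∧
    ((-∑ s : Fin n → A, ∑ a, μ (Fin.snoc s a) *
        Real.log (μ (Fin.snoc s a) / muMinus μ s)) - J u = 0 ↔
      u = MarkovExt μ q) := by
  obtain ⟨⟨hu, -⟩, hsc, hμ⟩ := hu
  obtain rfl : μ = eta u := funext fun c => (hμ c).symm
  rw [hsc.entropy_gap_eq hu, hsc.markovExt_eq hu hqpos]
  refine ⟨?_, hsc.sum_mul_log_div_markovExtOf_nonneg hu,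
    hsc.sum_mul_log_div_markovExtOf_eq_zero_iff hu⟩
  simp only [markovExtOf, div_div_eq_mul_div]

/-- The gap functional
`Δ_μ(u) = [−∑_{s,a} μ(s,a) log(μ(s,a)/μ₋(s))] − J(u)` equals
`∑_{c,a} u(c,a)·log(u(c,a)·μ₋(c₂,…,c_r) / (μ(c)·μ((c₂,…,c_r),a)))`, is
nonnegative on `U(μ)`, and vanishes exactly at the Markov extension `u*`.
(Terms with `u(c,a) = 0` contribute `0` automatically since `0 * x = 0`.) -/
theorem stmt9 {A : Type*} [Fintype A] [Nonempty A] {n : ℕ}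
    (μ : (Fin (n + 1) → A) → ℝ)
    (hμ : (∀ c, 0 ≤ μ c) ∧ ∑ c, μ c = 1)
    (hμstat : ∀ s : Fin n → A, ∑ a, μ (Fin.snoc s a) = ∑ α, μ (Fin.cons α s))
    (q : (Fin n → A) → A → ℝ)
    (hqpos : ∀ s, 0 < muMinus μ s → ∀ a, q s a = μ (Fin.snoc s a) / muMinus μ s)
    (hqzero : ∀ s, muMinus μ s = 0 → (∀ a, 0 ≤ q s a) ∧ ∑ a, q s a = 1)
    (u : (Fin (n + 1) → A) → A → ℝ)
    (hu : IsBlockLaw u ∧ StationaryConsistent u ∧ ∀ c, eta u c = μ c) :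
    ((-∑ s : Fin n → A, ∑ a, μ (Fin.snoc s a) *
        Real.log (μ (Fin.snoc s a) / muMinus μ s)) - J u =
      ∑ c, ∑ a, u c a *
        Real.log (u c a * muMinus μ (Fin.tail c) /
          (μ c * μ (Fin.snoc (Fin.tail c) a)))) ∧
    0 ≤ (-∑ s : Fin n → A, ∑ a, μ (Fin.snoc s a) *
        Real.log (μ (Fin.snoc s a) / muMinus μ s)) - J u ∧
    ((-∑ s : Fin n → A, ∑ a, μ (Fin.snoc s a) *
        Real.log (μ (Fin.snoc s a) / muMinus μ s)) - J u = 0 ↔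
      u = MarkovExt μ q) :=
  stmt9_general μ q hqpos u hu
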